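/- arXiv:1202.2296 — 4 statements merged into one kernel-verified Lean document; each statement's English description precedes it below -/
import Mathlib

section
/- The guarded graph tautology clause set GGT_n is unsatisfiable for every n > 1. -/
/-- The guarded graph tautology clause set GGT_n is unsatisfiable
for every n > 1, where r, s : [n]³ → [n] satisfy r ≠ s, {r,s} ⊄ {i,j,k}, and
are invariant under cyclic permutations. -/
theorem GGT_unsatisfiable (n : ℕ) (hn : 1 < n)
    (r s : Fin n → Fin n → Fin n → Fin n)
    (hrs : ∀ i j k : Fin n, r i j k ≠ s i j k)
    (hns : ∀ i j k : Fin n, ¬ ({r i j k, s i j k} : Set (Fin n)) ⊆ ({i, j, k} : Set (Fin n)))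
    (hcycr : ∀ i j k : Fin n, r i j k = r j k i)
    (hcycs : ∀ i j k : Fin n, s i j k = s j k i) :
    ¬ ∃ σ : Fin n → Fin n → Bool,
      (∀ i j : Fin n, i ≠ j → σ i j = !σ j i) ∧
      -- (α) clauses
      (∀ i : Fin n, ∃ j : Fin n, j ≠ i ∧ σ j i = true) ∧
      -- (γ') guarded transitivity clauses T_{i,j,k} ∨ x_{r,s} and T_{i,j,k} ∨ ¬x_{r,s}
      (∀ i j k : Fin n, i ≠ j → j ≠ k → i ≠ k →
        (σ i j = false ∨ σ j k = false ∨ σ k i = false ∨ σ (r i j k) (s i j k) = true) ∧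
        (σ i j = false ∨ σ j k = false ∨ σ k i = false ∨ σ (r i j k) (s i j k) = false)) := by
  rintro ⟨σ, hanti, halpha, hgamma⟩
  -- no directed triangle
  have notri : ∀ i j k : Fin n, i ≠ j → j ≠ k → i ≠ k →
      σ i j = true → σ j k = true → σ k i = true → False := by
    intro i j k hij hjk hik h1 h2 h3
    obtain ⟨c1, c2⟩ := hgamma i j k hij hjk hik
    rcases c1 with h | h | h | h <;> simp_all

  -- the relation "a beats b"
  set R : Fin n → Fin n → Prop := fun a b => a ≠ b ∧ σ a b = true with hR
  have htrans : Transitive R := by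
    intro a b c ⟨hab, sab⟩ ⟨hbc, sbc⟩
    have hac : a ≠ c := by
      rintro rfl
      have := hanti a b hab
      rw [sab, sbc] at this
      exact absurd this (by simp)
    refine ⟨hac, ?_⟩
    by_contra hsac
    have h1 : σ a c = false := by
      cases h : σ a c with
      | true => exact absurd h hsac
      | false => rfl
    have h2 : σ c a = true := by
      have := hanti c a hac.symm
      rw [this, h1]; rfl
    exact notri a b c hab hbc hac sab sbc h2
  have hirr : ∀ a, ¬ R a a := by
    intro a ⟨h, _⟩; exact h rfl
  -- well-foundedness on a finite type
  have hwf : WellFounded R := by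
    have : IsIrrefl (Fin n) R := ⟨hirr⟩
    have : IsTrans (Fin n) R := ⟨fun a b c hab hbc => htrans hab hbc⟩
    exact Finite.wellFounded_of_trans_of_irrefl R
  obtain ⟨m, -, hm⟩ := hwf.has_min Set.univ ⟨⟨0, lt_trans Nat.zero_lt_one hn⟩, trivial⟩
  obtain ⟨j, hj, hσ⟩ := halpha m
  exact hm j trivial ⟨hj, hσ⟩
end

section
/- For every nonempty bipartite partial order π on [n] with n > 1, there is no truth assignment that satisfies all clauses of GT_{π,n} and also satisfies x_{i,j} = true for all (i,j) ∈ π. Equivalently, GT_{π,n} together with the unit clauses {x_{i,j} : i π j} is unsatisfiable. -/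
/-- For every nonempty bipartite partial order π on [n] with n > 1,
GT_{π,n} together with the unit clauses {x_{i,j} : i π j} is unsatisfiable. -/
theorem GT_pi_with_units_unsatisfiable (n : ℕ) (hn : 1 < n)
    (π : Fin n → Fin n → Prop)
    (hdisj : ∀ a : Fin n, (∃ b, π a b) → ¬ ∃ c, π c a)
    (hne : ∃ a b : Fin n, π a b) :
    ¬ ∃ σ : Fin n → Fin n → Bool,
      (∀ i j : Fin n, i ≠ j → σ i j = !σ j i) ∧
      -- (α) clauses for i ∈ M_π
      (∀ i : Fin n, (∀ k, ¬ π k i) → ∃ j : Fin n, j ≠ i ∧ σ j i = true) ∧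
      -- (β) transitivity clauses for distinct i,j,k ∈ M_π
      (∀ i j k : Fin n, i ≠ j → j ≠ k → i ≠ k →
        (∀ u, ¬ π u i) → (∀ u, ¬ π u j) → (∀ u, ¬ π u k) →
        (σ i j = false ∨ σ j k = false ∨ σ k i = false)) ∧
      -- (γ) transitivity clauses
      (∀ i j k : Fin n, i ≠ j → j ≠ k → i ≠ k →
        (∀ u, ¬ π u i) → (∀ u, ¬ π u j) → ¬ π i k → π j k →
        (σ i j = false ∨ σ j k = false ∨ σ k i = false)) ∧
      -- unit clauses x_{i,j} for i π j
      (∀ i j : Fin n, π i j → σ i j = true) := by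
  rintro ⟨σ, hsym, hα, hβ, hγ, hunit⟩
  -- M i : i is a minimal element
  -- Step 1: every minimal element has a minimal predecessor under σ
  have pred : ∀ i : Fin n, (∀ k, ¬ π k i) →
      ∃ j : Fin n, (∀ k, ¬ π k j) ∧ j ≠ i ∧ σ j i = true := by
    intro i hi
    obtain ⟨j, hji, hσji⟩ := hα i hi
    by_cases hj : ∀ k, ¬ π k j
    · exact ⟨j, hj, hji, hσji⟩
    · push_neg at hj
      obtain ⟨u, huj⟩ := hj
      have hu : ∀ k, ¬ π k u := fun k hk => hdisj u ⟨j, huj⟩ ⟨k, hk⟩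
      have hσuj : σ u j = true := hunit u j huj
      have huj' : u ≠ j := by
        rintro rfl
        exact hdisj u ⟨u, huj⟩ ⟨u, huj⟩
      have hnij : ¬ π i j := by
        intro h
        have h1 := hunit i j h
        have h2 := hsym i j (Ne.symm hji)
        rw [h1, hσji] at h2
        simp at h2
      have hui : u ≠ i := by rintro rfl; exact hnij huj
      rcases hγ i u j (Ne.symm hui) huj' (Ne.symm hji) hi hu hnij huj with h | h | h
      · have h2 := hsym i u (Ne.symm hui)
        rw [h] at h2
        exact ⟨u, hu, hui, by simpa using h2.symm⟩
      · rw [hσuj] at h; exact absurd h (by simp)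
      · rw [hσji] at h; exact absurd h (by simp)
  -- Step 2: the relation R on minimal elements
  obtain ⟨a, b, hab⟩ := hne
  have ha : ∀ k, ¬ π k a := fun k hk => hdisj a ⟨b, hab⟩ ⟨k, hk⟩
  let R : {i : Fin n // ∀ k, ¬ π k i} → {i : Fin n // ∀ k, ¬ π k i} → Prop :=
    fun x y => x.1 ≠ y.1 ∧ σ x.1 y.1 = true
  haveI : IsIrrefl _ R := ⟨fun x h => h.1 rfl⟩
  haveI : IsTrans _ R := by
    constructor
    rintro x y z ⟨hxy, hsxy⟩ ⟨hyz, hsyz⟩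
    by_cases hxz : x.1 = z.1
    · exfalso
      have h2 := hsym x.1 y.1 hxy
      rw [hsxy, hxz, hsyz] at h2
      simp at h2
    · rcases hβ x.1 y.1 z.1 hxy hyz hxz x.2 y.2 z.2 with h | h | h
      · rw [hsxy] at h; exact absurd h (by simp)
      · rw [hsyz] at h; exact absurd h (by simp)
      · have h2 := hsym z.1 x.1 (Ne.symm hxz)
        rw [h] at h2
        exact ⟨hxz, by simpa using h2.symm⟩
  have wf := Finite.wellFounded_of_trans_of_irrefl R
  obtain ⟨m, -, hmin⟩ := wf.has_min Set.univ ⟨⟨a, ha⟩, trivial⟩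
  obtain ⟨j, hjM, hji, hσ⟩ := pred m.1 m.2
  exact hmin ⟨j, hjM⟩ trivial ⟨hji, hσ⟩
end

section
/- The clause ¬π̄ := {¬x_{i,j} : i π j} is a semantic consequence of GT_{π,n} in the following sense: every truth assignment satisfying all clauses of GT_{π,n} satisfies ¬x_{i,j} for some pair (i,j) ∈ π, provided π is nonempty and n > 1. -/
/-- The clause ¬π̄ = {¬x_{i,j} : i π j} is a semantic consequence
of GT_{π,n}: every truth assignment satisfying all clauses of GT_{π,n}
satisfies ¬x_{i,j} for some pair (i,j) ∈ π, provided π is nonempty and n > 1. -/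
theorem GT_pi_implies_neg_pi_clause (n : ℕ) (hn : 1 < n)
    (π : Fin n → Fin n → Prop)
    (hdisj : ∀ a : Fin n, (∃ b, π a b) → ¬ ∃ c, π c a)
    (hne : ∃ a b : Fin n, π a b) :
    ∀ σ : Fin n → Fin n → Bool,
      (∀ i j : Fin n, i ≠ j → σ i j = !σ j i) →
      -- (α) clauses for i ∈ M_π
      (∀ i : Fin n, (∀ k, ¬ π k i) → ∃ j : Fin n, j ≠ i ∧ σ j i = true) →
      -- (β) transitivity clauses for distinct i,j,k ∈ M_π
      (∀ i j k : Fin n, i ≠ j → j ≠ k → i ≠ k →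
        (∀ u, ¬ π u i) → (∀ u, ¬ π u j) → (∀ u, ¬ π u k) →
        (σ i j = false ∨ σ j k = false ∨ σ k i = false)) →
      -- (γ) transitivity clauses
      (∀ i j k : Fin n, i ≠ j → j ≠ k → i ≠ k →
        (∀ u, ¬ π u i) → (∀ u, ¬ π u j) → ¬ π i k → π j k →
        (σ i j = false ∨ σ j k = false ∨ σ k i = false)) →
      ∃ i j : Fin n, π i j ∧ σ i j = false := by
  classical
  intro σ hsym hα hβ hγ
  by_contra hcon
  push_neg at hcon
  have hσπ : ∀ i j, π i j → σ i j = true := by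
    intro i j h
    have h1 := hcon i j h
    cases h2 : σ i j with
    | false => exact absurd h2 h1
    | true => rfl
  set M : Finset (Fin n) := Finset.univ.filter (fun i => ∀ u, ¬ π u i) with hM
  have hMmem : ∀ i, i ∈ M ↔ ∀ u, ¬ π u i := by
    intro i; simp [hM]
  obtain ⟨a, b, hab⟩ := hne
  have haM : a ∈ M := (hMmem a).2 (fun u hu => hdisj a ⟨b, hab⟩ ⟨u, hu⟩)
  have hMne : M.Nonempty := ⟨a, haM⟩
  obtain ⟨i, hiM, hmax⟩ := Finset.exists_max_image M
    (fun i => (M.filter (fun m => m ≠ i ∧ σ i m = true)).card) hMne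
  have hiMax : ∀ m ∈ M, m ≠ i → σ m i = false := by
    intro m hm hmi
    by_contra hmi'
    have hmitrue : σ m i = true := by
      cases h : σ m i with
      | false => exact absurd h hmi'
      | true => rfl
    have hsub : (M.filter (fun k => k ≠ i ∧ σ i k = true)) ⊆
        M.filter (fun k => k ≠ m ∧ σ m k = true) := by
      intro k hk
      simp only [Finset.mem_filter] at hk ⊢
      obtain ⟨hkM, hki, hik⟩ := hk
      have hkm : k ≠ m := by
        intro h; subst h
        have h2 := hsym i k (Ne.symm hki)
        rw [hmitrue, hik] at h2
        simp at h2
      refine ⟨hkM, hkm, ?_⟩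
      by_contra hmk
      have hmkfalse : σ m k = false := by
        cases h : σ m k with
        | false => rfl
        | true => exact absurd h hmk
      have hkm' : σ k m = true := by
        have h2 := hsym k m hkm; rw [hmkfalse] at h2; simpa using h2
      have hβ' := hβ i k m (Ne.symm hki) hkm (Ne.symm hmi)
        ((hMmem i).1 hiM) ((hMmem k).1 hkM) ((hMmem m).1 hm)
      rcases hβ' with h | h | h
      · rw [hik] at h; simp at h
      · rw [hkm'] at h; simp at h
      · rw [hmitrue] at h; simp at h
    have hiIn : i ∈ M.filter (fun k => k ≠ m ∧ σ m k = true) := by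
      simp only [Finset.mem_filter]
      exact ⟨hiM, Ne.symm hmi, hmitrue⟩
    have hiNotIn : i ∉ M.filter (fun k => k ≠ i ∧ σ i k = true) := by simp
    have hlt : (M.filter (fun k => k ≠ i ∧ σ i k = true)).card <
        (M.filter (fun k => k ≠ m ∧ σ m k = true)).card :=
      Finset.card_lt_card ⟨hsub, fun hall => hiNotIn (hall hiIn)⟩
    exact absurd (hmax m hm) (Nat.not_le.mpr hlt)
  obtain ⟨j, hji, hjitrue⟩ := hα i ((hMmem i).1 hiM)
  have hjnM : j ∉ M := by
    intro hj
    have h2 := hiMax j hj hji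
    rw [hjitrue] at h2; simp at h2
  obtain ⟨c, hcj⟩ : ∃ c, π c j := by
    by_contra h
    push_neg at h
    exact hjnM ((hMmem j).2 h)
  have hcM : c ∈ M := (hMmem c).2 (fun u hu => hdisj c ⟨j, hcj⟩ ⟨u, hu⟩)
  have hcjtrue : σ c j = true := hσπ c j hcj
  have hcj' : c ≠ j := by
    intro h; subst h
    exact ((hMmem c).1 hcM) c hcj
  have hij_false : σ i j = false := by
    have h2 := hsym i j (Ne.symm hji)
    rw [hjitrue] at h2; simpa using h2
  have hπij : ¬ π i j := fun h => by
    rw [hσπ i j h] at hij_false; simp at hij_false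
  by_cases hic : i = c
  · subst hic
    rw [hcjtrue] at hij_false; simp at hij_false
  · have hγ' := hγ i c j hic hcj' (Ne.symm hji)
      ((hMmem i).1 hiM) ((hMmem c).1 hcM) hπij hcj
    have hcif : σ c i = false := hiMax c hcM (Ne.symm hic)
    have hict : σ i c = true := by
      have h2 := hsym i c hic; rw [hcif] at h2; simpa using h2
    rcases hγ' with h | h | h
    · rw [hict] at h; simp at h
    · rw [hcjtrue] at h; simp at h
    · rw [hjitrue] at h; simp at h
end

section
/- A regular dag-like resolution derivation of depth d and size s can be transformed into a tree-like regular resolution derivation with input lemmas of the same conclusion, of size at most s·(d+1): each clause C in the dag needs to be repeated at most d_C times, where d_C is the depth of C's derivation, before it is learned by an input subderivation. -/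
/-- A dag-like resolution derivation from a CNF `F`.  Nodes are indexed by
`Fin size`; a node is either a leaf labeled by a clause of `F` (`rule i = none`)
or derived by resolving two earlier nodes on a pivot variable. -/
structure DagDeriv (V : Type) [DecidableEq V] (F : Set (Finset (V × Bool))) where
  size : ℕ
  clause : Fin size → Finset (V × Bool)
  rule : Fin size → Option (Fin size × Fin size × V)
  leaf_mem : ∀ i, rule i = none → clause i ∈ F
  res_lt : ∀ i a b x, rule i = some (a, b, x) → a < i ∧ b < i
  res_ok : ∀ i a b x, rule i = some (a, b, x) →
    (x, true) ∈ clause a ∧ (x, false) ∈ clause b ∧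
    (x, false) ∉ clause a ∧ (x, true) ∉ clause b ∧
    clause i = (clause a).erase (x, true) ∪ (clause b).erase (x, false)

/-- Edge from a derived node to one of its premises. -/
def DagDeriv.edge {V : Type} [DecidableEq V] {F : Set (Finset (V × Bool))}
    (D : DagDeriv V F) (i j : Fin D.size) : Prop :=
  ∃ a b x, D.rule i = some (a, b, x) ∧ (j = a ∨ j = b)

/-- Regularity: no variable is resolved on twice along any path from a clause
toward the leaves (equivalently, toward the conclusion). -/
def DagDeriv.Regular {V : Type} [DecidableEq V] {F : Set (Finset (V × Bool))}
    (D : DagDeriv V F) : Prop :=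
  ∀ i j : Fin D.size, Relation.TransGen D.edge i j →
    ∀ a b x a' b', D.rule i = some (a, b, x) → D.rule j = some (a', b', x) → False

/-- Binary resolution proof trees: a leaf labeled with a clause, or an internal
node labeled with a clause and the pivot variable. -/
inductive RTree (V : Type) where
  | leaf : Finset (V × Bool) → RTree V
  | node : Finset (V × Bool) → V → RTree V → RTree V → RTree V

namespace RTree

variable {V : Type}

def concl : RTree V → Finset (V × Bool)
  | leaf C => C
  | node C _ _ _ => C

def size : RTree V → ℕ
  | leaf _ => 1
  | node _ _ t₁ t₂ => t₁.size + t₂.size + 1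

/-- Postorder list of all subtrees. -/
def post : RTree V → List (RTree V)
  | leaf C => [leaf C]
  | node C x t₁ t₂ => t₁.post ++ t₂.post ++ [node C x t₁ t₂]

def pivots [DecidableEq V] : RTree V → Finset V
  | leaf _ => ∅
  | node _ x t₁ t₂ => insert x (t₁.pivots ∪ t₂.pivots)

/-- Regularity for trees: the pivot at a node is not used again above it. -/
def Regular [DecidableEq V] : RTree V → Prop
  | leaf _ => True
  | node _ x t₁ t₂ => x ∉ t₁.pivots ∧ x ∉ t₂.pivots ∧ t₁.Regular ∧ t₂.Regular

/-- All internal nodes are correct resolution inferences. -/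
def ResOk [DecidableEq V] : RTree V → Prop
  | leaf _ => True
  | node C x t₁ t₂ =>
      ((x, true) ∈ t₁.concl ∧ (x, false) ∈ t₂.concl ∧
       (x, false) ∉ t₁.concl ∧ (x, true) ∉ t₂.concl ∧
       C = (t₁.concl.erase (x, true)) ∪ (t₂.concl.erase (x, false))) ∧
      t₁.ResOk ∧ t₂.ResOk

def isLeaf : RTree V → Prop
  | leaf _ => True
  | node _ _ _ _ => False

/-- An input subderivation: every inference has at least one hypothesis that
is a leaf (an initial clause or a lemma). -/
def Input : RTree V → Prop
  | leaf _ => True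
  | node _ _ t₁ t₂ => (t₁.isLeaf ∨ t₂.isLeaf) ∧ t₁.Input ∧ t₂.Input

/-- Every leaf is labeled either with a clause of `F` or with a lemma: the
conclusion of a subtree occurring strictly earlier in the postorder traversal
that is an input subderivation. -/
def LemOk (F : Set (Finset (V × Bool))) (T : RTree V) : Prop :=
  ∀ (j : ℕ) (hj : j < T.post.length), (T.post.get ⟨j, hj⟩).isLeaf →
    (T.post.get ⟨j, hj⟩).concl ∈ F ∨
    ∃ (k : ℕ) (hk : k < T.post.length), k < j ∧ (T.post.get ⟨k, hk⟩).Input ∧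
      (T.post.get ⟨k, hk⟩).concl = (T.post.get ⟨j, hj⟩).concl

end RTree

set_option linter.unusedSectionVars false

namespace RTree

variable {V : Type} [DecidableEq V]

instance instDecIsLeaf : ∀ t : RTree V, Decidable t.isLeaf
  | .leaf _ => isTrue trivial
  | .node _ _ _ _ => isFalse id

instance instDecInput : ∀ t : RTree V, Decidable t.Input
  | .leaf _ => isTrue trivial
  | .node _ _ t₁ t₂ =>
    letI := instDecInput t₁
    letI := instDecInput t₂
    inferInstanceAs (Decidable ((t₁.isLeaf ∨ t₂.isLeaf) ∧ t₁.Input ∧ t₂.Input))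

lemma self_mem_post (t : RTree V) : t ∈ t.post := by
  cases t <;> simp [post]

lemma post_length_pos (t : RTree V) : 0 < t.post.length := by
  cases t <;> simp [post]

lemma isLeaf_size {t : RTree V} (h : t.isLeaf) : t.size = 1 := by
  cases t with
  | leaf _ => rfl
  | node _ _ _ _ => exact absurd h id

lemma isLeaf_input {t : RTree V} (h : t.isLeaf) : t.Input := by
  cases t with
  | leaf _ => trivial
  | node _ _ _ _ => exact absurd h id

end RTree

namespace DagTree

open RTree

variable {V : Type} [DecidableEq V] {F : Set (Finset (V × Bool))}

/-- Every leaf of `t` is an initial clause or justified by an input subtree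
occurring earlier in `ctx ++ t.post`. -/
def Just (F : Set (Finset (V × Bool))) (ctx : List (RTree V)) (t : RTree V) : Prop :=
  ∀ (j : ℕ) (hj : j < t.post.length), (t.post[j]'hj).isLeaf →
    (t.post[j]'hj).concl ∈ F ∨
    ∃ t' ∈ ctx ++ t.post.take j, t'.Input ∧ t'.concl = (t.post[j]'hj).concl

lemma just_leaf {ctx : List (RTree V)} {C : Finset (V × Bool)}
    (h : C ∈ F ∨ ∃ t' ∈ ctx, t'.Input ∧ t'.concl = C) :
    Just F ctx (RTree.leaf C) := by
  intro j hj hleaf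
  simp only [post, List.length_cons, List.length_nil] at hj
  interval_cases j
  · simpa [post, concl] using h


lemma just_node {ctx : List (RTree V)} {t₁ t₂ : RTree V} {C : Finset (V × Bool)} {x : V}
    (h1 : Just F ctx t₁) (h2 : Just F (ctx ++ t₁.post) t₂) :
    Just F ctx (RTree.node C x t₁ t₂) := by
  intro j hj hleaf
  have hpost : (RTree.node C x t₁ t₂).post = (t₁.post ++ t₂.post) ++ [RTree.node C x t₁ t₂] := by
    simp [post]
  have hj' : j < ((t₁.post ++ t₂.post) ++ [RTree.node C x t₁ t₂]).length := by
    rw [← hpost]; exact hj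
  by_cases hj1 : j < t₁.post.length
  · have hab : j < (t₁.post ++ t₂.post).length := by simp; omega
    have he : ((RTree.node C x t₁ t₂).post[j]'hj) = t₁.post[j]'hj1 := by
      simp only [hpost]
      rw [List.getElem_append_left hab, List.getElem_append_left hj1]
    have htake : (RTree.node C x t₁ t₂).post.take j = t₁.post.take j := by
      rw [hpost, List.take_append, List.take_append]
      have h1' : j - (t₁.post.length + t₂.post.length) = 0 := by omega
      simp [Nat.sub_eq_zero_of_le (le_of_lt hj1), Nat.sub_eq_zero_of_le (le_of_lt hab), h1']
    rw [he] at hleaf ⊢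
    rcases h1 j hj1 hleaf with h | ⟨t', ht', hi, hc⟩
    · exact Or.inl h
    · exact Or.inr ⟨t', by rw [htake]; exact ht', hi, hc⟩
  · push_neg at hj1
    by_cases hj2 : j < t₁.post.length + t₂.post.length
    · have hab : j < (t₁.post ++ t₂.post).length := by simp; omega
      have hj2' : j - t₁.post.length < t₂.post.length := by omega
      have he : ((RTree.node C x t₁ t₂).post[j]'hj) = t₂.post[j - t₁.post.length]'hj2' := by
        simp only [hpost]
        rw [List.getElem_append_left hab, List.getElem_append_right hj1]
      have htake : (RTree.node C x t₁ t₂).post.take j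
          = t₁.post ++ t₂.post.take (j - t₁.post.length) := by
        rw [hpost, List.take_append,
          Nat.sub_eq_zero_of_le (by simp; omega : j ≤ (t₁.post ++ t₂.post).length),
          List.take_append, List.take_of_length_le hj1]
        simp
      rw [he] at hleaf ⊢
      rcases h2 (j - t₁.post.length) hj2' hleaf with h | ⟨t', ht', hi, hc⟩
      · exact Or.inl h
      · refine Or.inr ⟨t', ?_, hi, hc⟩
        rw [htake]
        simp only [List.mem_append] at ht' ⊢
        tauto
    · have hj3 : j = t₁.post.length + t₂.post.length := by
        rw [hpost] at hj; simp at hj; omega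
      exfalso
      have hba : (t₁.post ++ t₂.post).length ≤ j := by simp; omega
      have : ((RTree.node C x t₁ t₂).post[j]'hj) = RTree.node C x t₁ t₂ := by
        simp only [hpost]
        rw [List.getElem_append_right hba, List.getElem_singleton]
      rw [this] at hleaf
      exact hleaf

end DagTree

namespace DagTree

open RTree

variable {V : Type} [DecidableEq V] {F : Set (Finset (V × Bool))}

/-- DFS construction with clause learning, with explicit fuel. -/
def buildAux (D : DagDeriv V F) : ℕ → Fin D.size → Finset (Fin D.size) →
    RTree V × Finset (Fin D.size)
  | 0, v, S => (RTree.leaf (D.clause v), S)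
  | (N+1), v, S =>
    match D.rule v with
    | none => (RTree.leaf (D.clause v), S)
    | some (a, b, x) =>
      let r1 := if a ∈ S ∨ D.rule a = none then (RTree.leaf (D.clause a), S)
                else buildAux D N a S
      let r2 := if b ∈ r1.2 ∨ D.rule b = none then (RTree.leaf (D.clause b), r1.2)
                else buildAux D N b r1.2
      let t := RTree.node (D.clause v) x r1.1 r2.1
      (t, if t.Input then insert v r2.2 else r2.2)

structure BuildFacts (D : DagDeriv V F) (d : ℕ) (dep : Fin D.size → ℕ)
    (v : Fin D.size) (S : Finset (Fin D.size)) (ctx : List (RTree V))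
    (t : RTree V) (S' : Finset (Fin D.size)) : Prop where
  concl : t.concl = D.clause v
  resok : t.ResOk
  reg : t.Regular
  piv : ∀ x ∈ t.pivots, ∃ u a b, Relation.ReflTransGen D.edge v u ∧ D.rule u = some (a, b, x)
  just : Just F ctx t
  inv : ∀ u ∈ S', ∃ t' ∈ ctx ++ t.post, t'.Input ∧ t'.concl = D.clause u
  mono : S ⊆ S'
  bnd : ∀ u ∈ S', u ∈ S ∨ (u ≤ v ∧ D.rule u ≠ none)
  notleaf : D.rule v ≠ none → ¬ t.isLeaf
  leafsize : D.rule v = none → t.size = 1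
  sizeG : t.Input → t.size + 2 * S.card ≤ 2 * S'.card + 1 ∧ (D.rule v ≠ none → v ∈ S')
  sizeF : ¬ t.Input → t.size + 2 * d + (d+1) * S.card ≤ (d+1) * S'.card + 1 + 2 * dep v

end DagTree

namespace DagTree

open RTree

variable {V : Type} [DecidableEq V] {F : Set (Finset (V × Bool))}

def Inv (D : DagDeriv V F) (S : Finset (Fin D.size)) (ctx : List (RTree V)) : Prop :=
  ∀ u ∈ S, ∃ t' ∈ ctx, t'.Input ∧ t'.concl = D.clause u

lemma childFacts (D : DagDeriv V F) (d : ℕ) (dep : Fin D.size → ℕ) (N : ℕ)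
    (IH : ∀ (w : Fin D.size), w.val < N → ∀ S ctx, w ∉ S → Inv D S ctx →
      BuildFacts D d dep w S ctx (buildAux D N w S).1 (buildAux D N w S).2)
    (c : Fin D.size) (hc : c.val < N) (S : Finset (Fin D.size)) (ctx : List (RTree V))
    (hInv : Inv D S ctx)
    (r : RTree V × Finset (Fin D.size))
    (hrdef : r = if c ∈ S ∨ D.rule c = none then (RTree.leaf (D.clause c), S)
              else buildAux D N c S) :
    r.1.concl = D.clause c ∧ r.1.ResOk ∧ r.1.Regular ∧
    (∀ x ∈ r.1.pivots, ∃ u a' b', Relation.ReflTransGen D.edge c u ∧ D.rule u = some (a', b', x)) ∧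
    Just F ctx r.1 ∧ Inv D r.2 (ctx ++ r.1.post) ∧
    S ⊆ r.2 ∧ (∀ u ∈ r.2, u ∈ S ∨ (u ≤ c ∧ D.rule u ≠ none)) ∧
    ((r.1.isLeaf ∧ r.2 = S) ∨
      (¬ r.1.isLeaf ∧ c ∉ S ∧ D.rule c ≠ none ∧
       (r.1.Input → r.1.size + 2*S.card ≤ 2*r.2.card + 1 ∧ c ∈ r.2) ∧
       (¬ r.1.Input → r.1.size + 2*d + (d+1)*S.card ≤ (d+1)*r.2.card + 1 + 2*dep c))) := by
  by_cases h : c ∈ S ∨ D.rule c = none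
  · rw [if_pos h] at hrdef
    subst hrdef
    refine ⟨rfl, trivial, trivial, by simp [RTree.pivots], ?_, ?_, Finset.Subset.refl _,
      fun u hu => Or.inl hu, Or.inl ⟨trivial, rfl⟩⟩
    · refine just_leaf ?_
      rcases h with h | h
      · exact Or.inr (hInv c h)
      · exact Or.inl (D.leaf_mem c h)
    · intro u hu
      obtain ⟨t', ht', hi, hc'⟩ := hInv u hu
      exact ⟨t', List.mem_append_left _ ht', hi, hc'⟩
  · push_neg at h
    rw [if_neg (by rw [not_or]; exact h)] at hrdef
    subst hrdef
    have B := IH c hc S ctx h.1 hInv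
    exact ⟨B.concl, B.resok, B.reg, B.piv, B.just, B.inv, B.mono, B.bnd,
      Or.inr ⟨B.notleaf h.2, h.1, h.2,
        fun hi => ⟨(B.sizeG hi).1, (B.sizeG hi).2 h.2⟩, B.sizeF⟩⟩

end DagTree

namespace DagTree

open RTree

variable {V : Type} [DecidableEq V] {F : Set (Finset (V × Bool))}

lemma mainFacts (D : DagDeriv V F) (d : ℕ) (dep : Fin D.size → ℕ)
    (hdepS : ∀ i a b x, D.rule i = some (a, b, x) → dep i = max (dep a) (dep b) + 1)
    (hdle : ∀ i, dep i ≤ d)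
    (hreg : D.Regular) :
    ∀ N (v : Fin D.size), v.val < N → ∀ S ctx, v ∉ S → Inv D S ctx →
      BuildFacts D d dep v S ctx (buildAux D N v S).1 (buildAux D N v S).2 := by
  intro N
  induction N with
  | zero => intro v hv; exact absurd hv (Nat.not_lt_zero _)
  | succ N IH =>
    intro v hvN S ctx hvS hInv
    rcases hr : D.rule v with _ | ⟨a, b, x⟩
    · -- axiom leaf
      have hstep : buildAux D (N+1) v S = (RTree.leaf (D.clause v), S) := by
        simp only [buildAux, hr]
      rw [hstep]
      dsimp only
      refine ⟨rfl, trivial, trivial, by simp [RTree.pivots],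
        just_leaf (Or.inl (D.leaf_mem v hr)), ?_, Finset.Subset.refl _,
        fun u hu => Or.inl hu, fun hne => absurd hr hne, fun _ => rfl, ?_, ?_⟩
      · intro u hu
        obtain ⟨t', ht', hi, hc'⟩ := hInv u hu
        exact ⟨t', List.mem_append_left _ ht', hi, hc'⟩
      · intro _
        refine ⟨?_, fun hne => absurd hr hne⟩
        have h1 : (RTree.leaf (D.clause v) : RTree V).size = 1 := rfl
        omega
      · intro hni
        exact absurd trivial hni
    · -- resolution node
      have hab := D.res_lt v a b x hr
      have haN : a.val < N := by
        have h1 : a.val < v.val := hab.1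
        omega
      have hbN : b.val < N := by
        have h1 : b.val < v.val := hab.2
        omega
      obtain ⟨r1, hr1def⟩ : ∃ r1 : RTree V × Finset (Fin D.size),
          r1 = (if a ∈ S ∨ D.rule a = none then (RTree.leaf (D.clause a), S)
           else buildAux D N a S) := ⟨_, rfl⟩
      obtain ⟨r2, hr2def⟩ : ∃ r2 : RTree V × Finset (Fin D.size),
          r2 = (if b ∈ r1.2 ∨ D.rule b = none then (RTree.leaf (D.clause b), r1.2)
           else buildAux D N b r1.2) := ⟨_, rfl⟩
      obtain ⟨c1concl, c1resok, c1reg, c1piv, c1just, c1inv, c1mono, c1bnd, c1last⟩ :=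
        childFacts D d dep N IH a haN S ctx hInv r1 hr1def
      obtain ⟨c2concl, c2resok, c2reg, c2piv, c2just, c2inv, c2mono, c2bnd, c2last⟩ :=
        childFacts D d dep N IH b hbN r1.2 (ctx ++ r1.1.post) c1inv r2 hr2def
      obtain ⟨t, htdef⟩ : ∃ t : RTree V, t = RTree.node (D.clause v) x r1.1 r2.1 := ⟨_, rfl⟩
      have hstep : buildAux D (N+1) v S =
          (t, if t.Input then insert v r2.2 else r2.2) := by
        rw [htdef, hr2def, hr1def]
        simp only [buildAux, hr]
      rw [hstep]
      dsimp only
      -- common facts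
      have hedgea : D.edge v a := ⟨a, b, x, hr, Or.inl rfl⟩
      have hedgeb : D.edge v b := ⟨a, b, x, hr, Or.inr rfl⟩
      have hvS2 : v ∉ r2.2 := by
        intro hv2
        rcases c2bnd v hv2 with hv1 | ⟨hle, _⟩
        · rcases c1bnd v hv1 with hv0 | ⟨hle, _⟩
          · exact hvS hv0
          · exact absurd hab.1 (not_lt_of_ge hle)
        · exact absurd hab.2 (not_lt_of_ge hle)
      have hdv : dep v = max (dep a) (dep b) + 1 := hdepS v a b x hr
      have hdva : dep a + 1 ≤ dep v := by omega
      have hdvb : dep b + 1 ≤ dep v := by omega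
      have hdvd : dep v ≤ d := hdle v
      have hconcl : t.concl = D.clause v := by rw [htdef]; rfl
      have hresok : t.ResOk := by
        rw [htdef]
        refine ⟨?_, c1resok, c2resok⟩
        rw [c1concl, c2concl]
        exact D.res_ok v a b x hr
      have hpiv : ∀ y ∈ t.pivots, ∃ u a' b',
          Relation.ReflTransGen D.edge v u ∧ D.rule u = some (a', b', y) := by
        intro y hy
        have hy' : y = x ∨ y ∈ r1.1.pivots ∨ y ∈ r2.1.pivots := by
          rw [htdef] at hy
          have hp : (RTree.node (D.clause v) x r1.1 r2.1).pivots
              = insert x (r1.1.pivots ∪ r2.1.pivots) := rfl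
          rw [hp] at hy
          simpa [Finset.mem_insert, Finset.mem_union] using hy
        rcases hy' with rfl | hy1 | hy2
        · exact ⟨v, a, b, Relation.ReflTransGen.refl, hr⟩
        · obtain ⟨u, a', b', hp, hu⟩ := c1piv y hy1
          exact ⟨u, a', b', Relation.ReflTransGen.head hedgea hp, hu⟩
        · obtain ⟨u, a', b', hp, hu⟩ := c2piv y hy2
          exact ⟨u, a', b', Relation.ReflTransGen.head hedgeb hp, hu⟩
      have hregt : t.Regular := by
        rw [htdef]
        refine ⟨?_, ?_, c1reg, c2reg⟩
        · intro hx
          obtain ⟨u, a', b', hp, hu⟩ := c1piv x hx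
          exact hreg v u (Relation.TransGen.head' hedgea hp) a b x a' b' hr hu
        · intro hx
          obtain ⟨u, a', b', hp, hu⟩ := c2piv x hx
          exact hreg v u (Relation.TransGen.head' hedgeb hp) a b x a' b' hr hu
      have hjust : Just F ctx t := by rw [htdef]; exact just_node c1just c2just
      have hpostmem : ∀ t', t' ∈ ctx ++ r1.1.post ++ r2.1.post → t' ∈ ctx ++ t.post := by
        intro t' ht'
        have hp : t.post = (r1.1.post ++ r2.1.post) ++ [RTree.node (D.clause v) x r1.1 r2.1] := by
          rw [htdef]; simp [RTree.post]
        rw [hp]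
        simp only [List.mem_append] at ht' ⊢
        rcases ht' with (h | h) | h
        · exact Or.inl h
        · exact Or.inr (Or.inl (Or.inl h))
        · exact Or.inr (Or.inl (Or.inr h))
      have hts : t.size = r1.1.size + r2.1.size + 1 := by rw [htdef]; rfl
      have hsub12 : S ⊆ r2.2 := c1mono.trans c2mono
      have hbndt : ∀ u ∈ r2.2, u ∈ S ∨ (u ≤ v ∧ D.rule u ≠ none) := by
        intro u hu
        rcases c2bnd u hu with hu1 | ⟨hle, hne⟩
        · rcases c1bnd u hu1 with hu0 | ⟨hle, hne⟩
          · exact Or.inl hu0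
          · exact Or.inr ⟨le_trans hle (le_of_lt hab.1), hne⟩
        · exact Or.inr ⟨le_trans hle (le_of_lt hab.2), hne⟩
      have hinv2 : ∀ u ∈ r2.2, ∃ t' ∈ ctx ++ t.post, t'.Input ∧ t'.concl = D.clause u := by
        intro u hu
        obtain ⟨t', ht', hi, hc'⟩ := c2inv u hu
        exact ⟨t', hpostmem t' ht', hi, hc'⟩
      have hrvne : D.rule v ≠ none := by rw [hr]; simp
      have hnotleaf : ¬ t.isLeaf := by rw [htdef]; exact fun h => h
      by_cases hI : t.Input
      · rw [if_pos hI]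
        have hcard : (insert v r2.2).card = r2.2.card + 1 :=
          Finset.card_insert_of_notMem hvS2
        have hI' : (r1.1.isLeaf ∨ r2.1.isLeaf) ∧ r1.1.Input ∧ r2.1.Input := by rw [htdef] at hI; exact hI
        refine ⟨hconcl, hresok, hregt, hpiv, hjust, ?_, ?_, ?_, fun _ => hnotleaf,
          fun h => absurd hr (by rw [h]; simp), ?_, fun h => absurd hI h⟩
        · intro u hu
          rcases Finset.mem_insert.mp hu with rfl | hu2
          · exact ⟨t, List.mem_append_right _ (self_mem_post t), hI, hconcl⟩
          · exact hinv2 u hu2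
        · exact hsub12.trans (Finset.subset_insert _ _)
        · intro u hu
          rcases Finset.mem_insert.mp hu with rfl | hu2
          · exact Or.inr ⟨le_refl u, hrvne⟩
          · exact hbndt u hu2
        · intro _
          refine ⟨?_, fun _ => Finset.mem_insert_self v r2.2⟩
          rw [hcard, hts]
          rcases c1last with ⟨hl1, hS1⟩ | ⟨hnl1, haS, hra, hG1, hF1⟩ <;>
            rcases c2last with ⟨hl2, hS2⟩ | ⟨hnl2, hbS1, hrb, hG2, hF2⟩
          · have e1 := isLeaf_size hl1
            have e2 := isLeaf_size hl2
            rw [hS2, hS1]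
            omega
          · have e1 := isLeaf_size hl1
            have h2 := (hG2 hI'.2.2).1
            rw [hS1] at h2
            omega
          · have e2 := isLeaf_size hl2
            have h1 := (hG1 hI'.2.1).1
            rw [hS2]
            omega
          · rcases hI'.1 with h | h
            · exact absurd h hnl1
            · exact absurd h hnl2
      · rw [if_neg hI]
        have hI' : ¬ ((r1.1.isLeaf ∨ r2.1.isLeaf) ∧ r1.1.Input ∧ r2.1.Input) := by rw [htdef] at hI; exact hI
        refine ⟨hconcl, hresok, hregt, hpiv, hjust, hinv2, hsub12, hbndt, fun _ => hnotleaf,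
          fun h => absurd hr (by rw [h]; simp), fun h => absurd h hI, ?_⟩
        intro _
        rw [hts]
        rcases c1last with ⟨hl1, hS1⟩ | ⟨hnl1, haS, hra, hG1, hF1⟩ <;>
          rcases c2last with ⟨hl2, hS2⟩ | ⟨hnl2, hbS1, hrb, hG2, hF2⟩
        · exact absurd ⟨Or.inl hl1, isLeaf_input hl1, isLeaf_input hl2⟩ hI'
        · have hni2 : ¬ r2.1.Input := fun hi2 =>
            hI' ⟨Or.inl hl1, isLeaf_input hl1, hi2⟩
          have h2 := hF2 hni2
          rw [hS1] at h2
          have e1 := isLeaf_size hl1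
          linarith
        · have hni1 : ¬ r1.1.Input := fun hi1 =>
            hI' ⟨Or.inr hl2, hi1, isLeaf_input hl2⟩
          have h1 := hF1 hni1
          have e2 := isLeaf_size hl2
          rw [hS2]
          linarith
        · by_cases hi1 : r1.1.Input <;> by_cases hi2 : r2.1.Input
          · -- both input
            have h1 := hG1 hi1
            have h2 := hG2 hi2
            have hlt1 : S.card + 1 ≤ r1.2.card :=
              Finset.card_lt_card ((Finset.ssubset_iff_of_subset c1mono).mpr ⟨a, h1.2, haS⟩)
            have hlt2 : r1.2.card + 1 ≤ r2.2.card :=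
              Finset.card_lt_card ((Finset.ssubset_iff_of_subset c2mono).mpr ⟨b, h2.2, hbS1⟩)
            have hda1 : 1 ≤ dep a := by
              rcases hra' : D.rule a with _ | ⟨a2, b2, x2⟩
              · exact absurd hra' hra
              · rw [hdepS a a2 b2 x2 hra']; omega
            have hdv2 : 2 ≤ dep v := by omega
            obtain ⟨e, he⟩ : ∃ e, r2.2.card = S.card + (e + 2) :=
              ⟨r2.2.card - S.card - 2, by omega⟩
            have hexp : (d+1) * r2.2.card = (d+1) * S.card + (d+1) * e + (2*d+2) := by
              rw [he]; ring
            have h2e : 2 * e ≤ (d+1) * e := Nat.mul_le_mul_right e (by omega)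
            linarith [h1.1, h2.1]
          · -- input, non-input
            have h1 := hG1 hi1
            have h2 := hF2 hi2
            have hle1 : S.card ≤ r1.2.card := Finset.card_le_card c1mono
            obtain ⟨e, he⟩ : ∃ e, r1.2.card = S.card + e := ⟨r1.2.card - S.card, by omega⟩
            have hexp : (d+1) * r1.2.card = (d+1) * S.card + (d+1) * e := by rw [he]; ring
            have h2e : 2 * e ≤ (d+1) * e := Nat.mul_le_mul_right e (by omega)
            linarith [h1.1]
          · -- non-input, input
            have h1 := hF1 hi1
            have h2 := hG2 hi2
            have hle2 : r1.2.card ≤ r2.2.card := Finset.card_le_card c2mono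
            obtain ⟨e, he⟩ : ∃ e, r2.2.card = r1.2.card + e := ⟨r2.2.card - r1.2.card, by omega⟩
            have hexp : (d+1) * r2.2.card = (d+1) * r1.2.card + (d+1) * e := by rw [he]; ring
            have h2e : 2 * e ≤ (d+1) * e := Nat.mul_le_mul_right e (by omega)
            linarith [h2.1]
          · -- both non-input
            have h1 := hF1 hi1
            have h2 := hF2 hi2
            linarith

end DagTree



/-- A regular dag-like resolution derivation of depth d and size s
can be transformed into a tree-like regular resolution derivation with input
lemmas of the same conclusion, of size at most s·(d+1). -/
theorem dag_to_tree_with_input_lemmas (V : Type) [DecidableEq V]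
    (F : Set (Finset (V × Bool))) (D : DagDeriv V F) (hpos : 0 < D.size)
    (d : ℕ) (dep : Fin D.size → ℕ)
    (hdep0 : ∀ i, D.rule i = none → dep i = 0)
    (hdepS : ∀ i a b x, D.rule i = some (a, b, x) →
      dep i = max (dep a) (dep b) + 1)
    (hdle : ∀ i, dep i ≤ d)
    (hreg : D.Regular) :
    ∃ T : RTree V, T.ResOk ∧ T.Regular ∧ RTree.LemOk F T ∧
      T.concl = D.clause ⟨D.size - 1, by omega⟩ ∧
      T.size ≤ D.size * (d + 1) := by
  classical
  have hlast : D.size - 1 < D.size := by omega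
  set last : Fin D.size := ⟨D.size - 1, hlast⟩ with hlastdef
  have B := DagTree.mainFacts D d dep hdepS hdle hreg D.size last (by omega)
    ∅ [] (Finset.notMem_empty last) (fun u hu => absurd hu (Finset.notMem_empty u))
  set T : RTree V := (DagTree.buildAux D D.size last ∅).1 with hTdef
  set S' : Finset (Fin D.size) := (DagTree.buildAux D D.size last ∅).2 with hSdef
  -- card bound for the learned set
  have h0 : D.rule ⟨0, hpos⟩ = none := by
    rcases h00 : D.rule ⟨0, hpos⟩ with _ | ⟨a, b, x⟩
    · rfl
    · exfalso
      have := (D.res_lt _ a b x h00).1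
      have : a.val < 0 := this
      omega
  have hnot0 : (⟨0, hpos⟩ : Fin D.size) ∉ S' := by
    intro hmem
    rcases B.bnd _ hmem with h | ⟨_, hne⟩
    · exact absurd h (Finset.notMem_empty _)
    · exact hne h0
  obtain ⟨m, hm'⟩ : ∃ m, D.size = m + 1 := ⟨D.size - 1, by omega⟩
  have hcard : S'.card ≤ m := by
    have hsub : S' ⊆ Finset.univ.erase ⟨0, hpos⟩ := fun u hu =>
      Finset.mem_erase.mpr ⟨fun he => hnot0 (he ▸ hu), Finset.mem_univ u⟩
    have := Finset.card_le_card hsub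
    rw [Finset.card_erase_of_mem (Finset.mem_univ _), Finset.card_univ, Fintype.card_fin] at this
    omega
  refine ⟨T, B.resok, B.reg, ?_, B.concl, ?_⟩
  · -- LemOk
    intro j hj hleaf
    simp only [List.get_eq_getElem] at hleaf ⊢
    rcases B.just j hj hleaf with h | ⟨t', ht', hi, hc⟩
    · exact Or.inl h
    · right
      rw [List.nil_append] at ht'
      obtain ⟨k, hk, hkeq⟩ := List.mem_iff_getElem.mp ht'
      have hkj : k < j := by
        have := hk
        simp only [List.length_take] at this
        omega
      have hklen : k < T.post.length := by
        have := hk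
        simp only [List.length_take] at this
        omega
      have hkeq' : T.post[k]'hklen = t' := by
        rw [← hkeq, List.getElem_take]
      exact ⟨k, hklen, hkj, by rw [hkeq']; exact hi, by rw [hkeq']; exact hc⟩
  · -- size
    by_cases hi : T.Input
    · have h := (B.sizeG hi).1
      rcases hrl : D.rule last with _ | ⟨a, b, x⟩
      · have h1 := B.leafsize hrl
        have : 1 ≤ D.size * (d + 1) := Nat.one_le_iff_ne_zero.mpr (by positivity)
        omega
      · have hd1 : 1 ≤ d := by
          have h1 := hdepS last a b x hrl
          have h2 := hdle last
          omega
        have hmul : (m + 1) * 2 ≤ (m + 1) * (d + 1) :=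
          Nat.mul_le_mul_left _ (by omega)
        have hgoal : D.size * (d + 1) = (m + 1) * (d + 1) := by rw [hm']
        rw [hgoal]
        simp only [Finset.card_empty] at h
        omega
    · have h := B.sizeF hi
      simp only [Finset.card_empty] at h
      have hmul : (d + 1) * S'.card ≤ (d + 1) * m := Nat.mul_le_mul_left _ hcard
      have hdl : dep last ≤ d := hdle last
      have hgoal : D.size * (d + 1) = (d + 1) * m + d + 1 := by rw [hm']; ring
      rw [hgoal]
      omega
end
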